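/- arXiv:1511.05022 — 6 statements merged into one kernel-verified Lean document; each statement's English description precedes it below -/
import Mathlib

section
/- Let S¹ = {z ∈ ℂ : |z| = 1} and let R_α(z) = e^{2πiα}z be the rigid rotation, where α ∈ (0,1) is irrational. Let (c_n)_{n≥1} be a sequence of complex numbers satisfying the growth condition and such that for every integer k, (1/N)·Σ_{n=1}^N c_n e^{-2πin(kα mod 1)} → 0 as N → ∞. Then (c_n) is linearly disjoint from the flow (S¹, R_α): for every continuous f : S¹ → ℂ and every z ∈ S¹, (1/N)·Σ_{n=1}^N c_n f(R_αⁿ z) → 0 as N → ∞. -/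
open Filter Finset Topology
open scoped Classical

/-- A sequence of complex numbers is *oscillating* if its twisted Cesàro means tend to zero
for every frequency `t ∈ [0,1)`. -/
def Oscillating (c : ℕ → ℂ) : Prop :=
  ∀ t : ℝ, 0 ≤ t → t < 1 →
    Filter.Tendsto
      (fun N : ℕ => (N : ℂ)⁻¹ * ∑ n ∈ Finset.Icc 1 N,
        c n * Complex.exp (-(2 * Real.pi * Complex.I * n * t)))
      Filter.atTop (nhds 0)

/-- The growth condition: `∑_{n=1}^N |c n|^λ = O(N)` for some `λ > 1`. -/
def GrowthCondition (c : ℕ → ℂ) : Prop :=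
  ∃ lam : ℝ, 1 < lam ∧ ∃ C : ℝ, ∀ N : ℕ,
    ∑ n ∈ Finset.Icc 1 N, ‖c n‖ ^ lam ≤ C * N

/-- Upper density of a set of natural numbers. -/
noncomputable def upperDensity (E : Set ℕ) : ℝ :=
  Filter.limsup (fun N : ℕ => (((Finset.Icc 1 N).filter (fun n => n ∈ E)).card : ℝ) / N)
    Filter.atTop

/-- A flow is mean-L-stable (MLS). -/
def IsMLS {X : Type*} [PseudoMetricSpace X] (T : X → X) : Prop :=
  ∀ ε : ℝ, 0 < ε → ∃ δ : ℝ, 0 < δ ∧ ∀ x y : X, dist x y < δ →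
    upperDensity {n : ℕ | ε ≤ dist (T^[n] x) (T^[n] y)} < ε

/-- The restriction of a flow to a subset `K` is mean-L-stable. -/
def IsMLSOn {X : Type*} [PseudoMetricSpace X] (T : X → X) (K : Set X) : Prop :=
  ∀ ε : ℝ, 0 < ε → ∃ δ : ℝ, 0 < δ ∧ ∀ x ∈ K, ∀ y ∈ K, dist x y < δ →
    upperDensity {n : ℕ | ε ≤ dist (T^[n] x) (T^[n] y)} < ε

/-- A minimal subset of a flow: nonempty, closed, invariant, and every forward orbit is dense. -/
def MinimalSubset {X : Type*} [TopologicalSpace X] (T : X → X) (K : Set X) : Prop :=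
  K.Nonempty ∧ IsClosed K ∧ Set.MapsTo T K K ∧
    ∀ x ∈ K, K ⊆ closure (Set.range fun n : ℕ => T^[n] x)

/-- A flow is minimally mean-L-stable (MMLS) if its restriction to every minimal subset is MLS. -/
def IsMMLS {X : Type*} [PseudoMetricSpace X] (T : X → X) : Prop :=
  ∀ K : Set X, MinimalSubset T K → IsMLSOn T K

/-- `x` is mean attracted to `K`. -/
def MeanAttracted {X : Type*} [PseudoMetricSpace X] (T : X → X) (x : X) (K : Set X) : Prop :=
  ∀ ε : ℝ, 0 < ε → ∃ z ∈ K,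
    Filter.limsup
      (fun N : ℕ => (N : ℝ)⁻¹ * ∑ n ∈ Finset.Icc 1 N, dist (T^[n] x) (T^[n] z))
      Filter.atTop < ε

/-- A flow is minimally mean attractable (MMA). -/
def IsMMA {X : Type*} [PseudoMetricSpace X] (T : X → X) : Prop :=
  ∀ x : X, ∃ K : Set X, MinimalSubset T K ∧ MeanAttracted T x K

/-- A sequence is linearly disjoint from a flow. -/
def LinearlyDisjoint {X : Type*} [TopologicalSpace X] (c : ℕ → ℂ) (T : X → X) : Prop :=
  ∀ f : C(X, ℂ), ∀ x : X,
    Filter.Tendsto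
      (fun N : ℕ => (N : ℂ)⁻¹ * ∑ n ∈ Finset.Icc 1 N, c n * f (T^[n] x))
      Filter.atTop (nhds 0)

/-- An equicontinuous flow. -/
def EquicontinuousFlow {X : Type*} [PseudoMetricSpace X] (T : X → X) : Prop :=
  ∀ ε : ℝ, 0 < ε → ∃ δ : ℝ, 0 < δ ∧ ∀ x y : X, dist x y < δ →
    ∀ n : ℕ, dist (T^[n] x) (T^[n] y) < ε


/-- The character `z ↦ z^k` on the circle. -/
noncomputable def circChar (k : ℤ) : C(Circle, ℂ) :=
  ⟨fun z => ((z ^ k : Circle) : ℂ), continuous_subtype_val.comp (continuous_zpow k)⟩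

@[simp] lemma circChar_apply (k : ℤ) (z : Circle) : circChar k z = ((z ^ k : Circle) : ℂ) := rfl

lemma circChar_mul (a b : ℤ) : circChar a * circChar b = circChar (a + b) := by
  ext z
  simp [circChar, zpow_add]

lemma circChar_zero : circChar 0 = 1 := by
  ext z; simp [circChar]

lemma star_circChar (k : ℤ) : star (circChar k) = circChar (-k) := by
  ext z
  simp only [ContinuousMap.star_apply, circChar_apply, zpow_neg, Complex.star_def,
    ← Circle.coe_inv_eq_conj]

/-- The submonoid of characters. -/
noncomputable def circCharMonoid : Submonoid C(Circle, ℂ) where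
  carrier := Set.range circChar
  one_mem' := ⟨0, circChar_zero⟩
  mul_mem' := by
    rintro _ _ ⟨a, rfl⟩ ⟨b, rfl⟩
    exact ⟨a + b, (circChar_mul a b).symm⟩

lemma holder_bound (c : ℕ → ℂ) (lam : ℝ) (hlam : 1 < lam) (C : ℝ)
    (hC : ∀ N : ℕ, ∑ n ∈ Finset.Icc 1 N, ‖c n‖ ^ lam ≤ C * N) :
    ∀ N : ℕ, ∑ n ∈ Finset.Icc 1 N, ‖c n‖ ≤ C ^ (1/lam) * N := by
  have hC0 : 0 ≤ C := by
    have h1 := hC 1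
    simp only [Finset.Icc_self, Finset.sum_singleton, Nat.cast_one, mul_one] at h1
    exact le_trans (Real.rpow_nonneg (norm_nonneg _) _) h1
  intro N
  rcases Nat.eq_zero_or_pos N with rfl | hN
  · simp
  have hpq : lam.HolderConjugate (Real.conjExponent lam) :=
    Real.HolderConjugate.conjExponent hlam
  set q := Real.conjExponent lam with hq
  have key : ∑ n ∈ Finset.Icc 1 N, ‖c n‖ * 1 ≤
      (∑ n ∈ Finset.Icc 1 N, ‖c n‖ ^ lam) ^ (1/lam) *
      (∑ n ∈ Finset.Icc 1 N, (1:ℝ) ^ q) ^ (1/q) :=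
    Real.inner_le_Lp_mul_Lq_of_nonneg (s := Finset.Icc 1 N)
      (f := fun n => ‖c n‖) (g := fun _ => (1:ℝ)) hpq
      (fun i _ => norm_nonneg _) (fun i _ => zero_le_one)
  simp only [mul_one, Real.one_rpow, Finset.sum_const, Nat.card_Icc, smul_eq_mul, nsmul_eq_mul,
    Nat.add_sub_cancel] at key
  have hNpos : (0:ℝ) < N := by exact_mod_cast hN
  calc ∑ n ∈ Finset.Icc 1 N, ‖c n‖
      ≤ (∑ n ∈ Finset.Icc 1 N, ‖c n‖ ^ lam) ^ (1/lam) * ((N:ℝ)) ^ (1/q) := key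
    _ ≤ (C * N) ^ (1/lam) * ((N:ℝ)) ^ (1/q) := by
        apply mul_le_mul_of_nonneg_right
        · exact Real.rpow_le_rpow (Finset.sum_nonneg fun i _ =>
            Real.rpow_nonneg (norm_nonneg _) _) (hC N) (by positivity)
        · positivity
    _ = C ^ (1/lam) * ((N:ℝ) ^ (1/lam) * (N:ℝ) ^ (1/q)) := by
        rw [Real.mul_rpow hC0 (le_of_lt hNpos)]; ring
    _ = C ^ (1/lam) * N := by
        rw [← Real.rpow_add hNpos]
        rw [show 1/lam + 1/q = 1 by
          have := hpq.inv_add_inv_eq_one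
          rw [one_div, one_div]; exact this]
        rw [Real.rpow_one]

lemma circle_coe_pow (z : Circle) (n : ℕ) : ((z ^ n : Circle) : ℂ) = (z : ℂ) ^ n := by
  induction n with
  | zero => simp
  | succ m ih => rw [pow_succ, Circle.coe_mul, ih, pow_succ]

lemma circle_coe_zpow (z : Circle) (k : ℤ) : ((z ^ k : Circle) : ℂ) = (z : ℂ) ^ k := by
  cases k with
  | ofNat n => simp [zpow_natCast, circle_coe_pow]
  | negSucc n => simp [zpow_negSucc, Circle.coe_inv, circle_coe_pow]

lemma circChar_iterate (α : ℝ) (k : ℤ) (x : Circle) (n : ℕ) :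
    circChar k ((fun z : Circle => Circle.exp (2 * Real.pi * α) * z)^[n] x) =
      circChar k x *
        Complex.exp (-(2 * Real.pi * Complex.I * n * (Int.fract (((-k : ℤ) : ℝ) * α)))) := by
  set F : ℤ := ⌊((-k : ℤ) : ℝ) * α⌋ with hF
  have hfr : (Int.fract (((-k : ℤ) : ℝ) * α)) = ((-k : ℤ) : ℝ) * α - F := rfl
  have hexp : (-(2 * Real.pi * Complex.I * n * ((Int.fract (((-k : ℤ) : ℝ) * α) : ℝ) : ℂ)) : ℂ)
      = ((n : ℤ) * k : ℤ) * (((2 * Real.pi * α : ℝ) : ℂ) * Complex.I)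
        + ((n : ℤ) * F : ℤ) * (2 * Real.pi * Complex.I) := by
    rw [hfr]
    push_cast
    ring
  rw [mul_left_iterate]
  simp only [circChar_apply]
  rw [mul_zpow, Circle.coe_mul, circle_coe_zpow, circle_coe_zpow, hexp, Complex.exp_add,
    Complex.exp_int_mul_two_pi_mul_I, mul_one]
  have hg : ((Circle.exp (2 * Real.pi * α) ^ n : Circle) : ℂ)
      = Complex.exp (((2 * Real.pi * α : ℝ) : ℂ) * Complex.I) ^ (n : ℤ) := by
    rw [circle_coe_pow]
    simp [Circle.coe_exp, zpow_natCast]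
  rw [hg, ← zpow_mul, ← Complex.exp_int_mul]
  push_cast
  ring

/-- A sequence satisfying the growth condition whose twisted Cesàro means
vanish at every frequency `kα mod 1` (`k ∈ ℤ`) is linearly disjoint from the irrational
rotation `R_α(z) = e^{2πiα} z` on the unit circle. -/
theorem linearlyDisjoint_of_rotation
    (α : ℝ) (hα0 : 0 < α) (hα1 : α < 1) (hirr : Irrational α)
    (c : ℕ → ℂ) (hgrowth : GrowthCondition c)
    (hosc : ∀ k : ℤ, Filter.Tendsto
      (fun N : ℕ => (N : ℂ)⁻¹ * ∑ n ∈ Finset.Icc 1 N,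
        c n * Complex.exp (-(2 * Real.pi * Complex.I * n * (Int.fract ((k : ℝ) * α)))))
      Filter.atTop (nhds 0)) :
    LinearlyDisjoint c (fun z : Circle => Circle.exp (2 * Real.pi * α) * z) := by
  obtain ⟨lam, hlam, C, hC⟩ := hgrowth
  have habs := holder_bound c lam hlam C hC
  set B : ℝ := C ^ (1/lam) with hB
  have hB0 : 0 ≤ B := by
    have h1 := habs 1
    simp only [Finset.Icc_self, Finset.sum_singleton, Nat.cast_one, mul_one] at h1
    exact le_trans (norm_nonneg _) h1
  intro f x
  set T : Circle → Circle := fun z : Circle => Circle.exp (2 * Real.pi * α) * z with hT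
  set P : C(Circle, ℂ) → Prop := fun h => Filter.Tendsto
      (fun N : ℕ => (N : ℂ)⁻¹ * ∑ n ∈ Finset.Icc 1 N, c n * h (T^[n] x))
      Filter.atTop (nhds 0) with hP
  show P f
  -- characters satisfy P
  have hchar : ∀ k : ℤ, P (circChar k) := by
    intro k
    have h1 := (hosc (-k)).const_mul (circChar k x)
    rw [mul_zero] at h1
    refine h1.congr fun N => ?_
    simp only [hT, circChar_iterate α k x]
    rw [show ∑ n ∈ Finset.Icc 1 N, c n * (circChar k x *
          Complex.exp (-(2 * Real.pi * Complex.I * n * (Int.fract (((-k : ℤ) : ℝ) * α)))))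
        = circChar k x * ∑ n ∈ Finset.Icc 1 N, c n *
          Complex.exp (-(2 * Real.pi * Complex.I * n * (Int.fract (((-k : ℤ) : ℝ) * α)))) from by
      rw [Finset.mul_sum]; exact Finset.sum_congr rfl fun n _ => by ring]
    push_cast
    ring
  -- P holds on the span of characters
  have hspan : ∀ h ∈ Submodule.span ℂ (Set.range circChar), P h := by
    intro h hh
    induction hh using Submodule.span_induction with
    | mem u hu => obtain ⟨k, rfl⟩ := hu; exact hchar k
    | zero =>
        simp only [hP, ContinuousMap.zero_apply, mul_zero, Finset.sum_const_zero]
        exact tendsto_const_nhds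
    | add u v hu hv hPu hPv =>
        have h2 := hPu.add hPv
        rw [add_zero] at h2
        refine h2.congr fun N => ?_
        simp only [ContinuousMap.add_apply, mul_add, Finset.sum_add_distrib]
    | smul a u hu hPu =>
        have h2 := hPu.const_mul a
        rw [mul_zero] at h2
        refine h2.congr fun N => ?_
        simp only [ContinuousMap.smul_apply, smul_eq_mul]
        rw [show ∑ n ∈ Finset.Icc 1 N, c n * (a * u (T^[n] x))
            = a * ∑ n ∈ Finset.Icc 1 N, c n * u (T^[n] x) from by
          rw [Finset.mul_sum]; exact Finset.sum_congr rfl fun n _ => by ring]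
        ring
  -- Stone--Weierstrass: the star algebra generated by `circChar 1` is dense
  set A : StarSubalgebra ℂ C(Circle, ℂ) := StarAlgebra.adjoin ℂ {circChar 1} with hA
  have hsep : A.SeparatesPoints := by
    intro z w hzw
    refine ⟨_, ⟨circChar 1, StarAlgebra.self_mem_adjoin_singleton ℂ _, rfl⟩, ?_⟩
    simp only [circChar_apply, zpow_one]
    exact fun h => hzw (Circle.ext h)
  have htop := ContinuousMap.starSubalgebra_topologicalClosure_eq_top_of_separatesPoints A hsep
  have hfA : f ∈ closure (A : Set C(Circle, ℂ)) := by
    rw [← StarSubalgebra.topologicalClosure_coe, htop]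
    trivial
  have hA_sub : (A : Set C(Circle, ℂ)) ⊆
      (Submodule.span ℂ (Set.range circChar) : Set C(Circle, ℂ)) := by
    intro h hh
    have h2 : h ∈ Submodule.span ℂ
        ((Submonoid.closure (({circChar 1} : Set C(Circle, ℂ)) ∪ star {circChar 1}) :
          Submonoid C(Circle, ℂ)) : Set C(Circle, ℂ)) := by
      have := StarAlgebra.adjoin_eq_span (R := ℂ) ({circChar 1} : Set C(Circle, ℂ))
      rw [← hA] at this
      exact this ▸ hh
    refine Submodule.span_mono ?_ h2
    have hcl : Submonoid.closure (({circChar 1} : Set C(Circle, ℂ)) ∪ star {circChar 1})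
        ≤ circCharMonoid := by
      rw [Submonoid.closure_le]
      rintro u (hu | hu)
      · rw [Set.mem_singleton_iff] at hu
        exact ⟨1, hu.symm⟩
      · rw [Set.star_singleton, Set.mem_singleton_iff] at hu
        exact ⟨-1, by rw [hu, star_circChar]⟩
    exact hcl
  have hfcl : f ∈ closure ((Submodule.span ℂ (Set.range circChar) : Submodule ℂ _) :
      Set C(Circle, ℂ)) := closure_mono hA_sub hfA
  -- epsilon argument
  change Filter.Tendsto _ Filter.atTop (nhds 0)
  rw [NormedAddCommGroup.tendsto_nhds_zero]
  intro ε hε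
  set d : ℝ := ε / (2 * (B + 1)) with hd
  have hd0 : 0 < d := by positivity
  obtain ⟨h, hhmem, hdist⟩ := Metric.mem_closure_iff.mp hfcl d hd0
  have hPh := hspan h hhmem
  have h2 := (NormedAddCommGroup.tendsto_nhds_zero.mp hPh) (ε/2) (by positivity)
  filter_upwards [h2, Filter.eventually_ge_atTop 1] with N hN2 hN1
  have hNpos : (0:ℝ) < N := by exact_mod_cast hN1
  have key : ‖((N : ℂ)⁻¹ * ∑ n ∈ Finset.Icc 1 N, c n * f (T^[n] x))
      - ((N : ℂ)⁻¹ * ∑ n ∈ Finset.Icc 1 N, c n * h (T^[n] x))‖ ≤ B * d := by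
    rw [← mul_sub, ← Finset.sum_sub_distrib]
    simp only [← mul_sub]
    calc ‖(N : ℂ)⁻¹ * ∑ n ∈ Finset.Icc 1 N, c n * (f (T^[n] x) - h (T^[n] x))‖
        = ‖(N : ℂ)⁻¹‖ * ‖∑ n ∈ Finset.Icc 1 N, c n * (f (T^[n] x) - h (T^[n] x))‖ :=
          norm_mul _ _
      _ ≤ (N : ℝ)⁻¹ * ∑ n ∈ Finset.Icc 1 N, ‖c n * (f (T^[n] x) - h (T^[n] x))‖ := by
          rw [norm_inv, Complex.norm_natCast]
          exact mul_le_mul_of_nonneg_left (norm_sum_le _ _) (by positivity)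
      _ ≤ (N : ℝ)⁻¹ * ∑ n ∈ Finset.Icc 1 N, ‖c n‖ * d := by
          refine mul_le_mul_of_nonneg_left (Finset.sum_le_sum fun n _ => ?_) (by positivity)
          rw [norm_mul]
          refine mul_le_mul_of_nonneg_left ?_ (norm_nonneg _)
          rw [← dist_eq_norm]
          exact le_trans (ContinuousMap.dist_apply_le_dist _) hdist.le
      _ ≤ (N : ℝ)⁻¹ * ((B * N) * d) := by
          refine mul_le_mul_of_nonneg_left ?_ (by positivity)
          rw [← Finset.sum_mul]
          exact mul_le_mul_of_nonneg_right (habs N) hd0.le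
      _ = B * d := by field_simp
  have hBd : B * d ≤ ε / 2 := by
    have h3 : (B + 1) * d = ε / 2 := by
      rw [hd]; field_simp
    nlinarith
  calc ‖(N : ℂ)⁻¹ * ∑ n ∈ Finset.Icc 1 N, c n * f (T^[n] x)‖
      ≤ ‖((N : ℂ)⁻¹ * ∑ n ∈ Finset.Icc 1 N, c n * f (T^[n] x))
          - ((N : ℂ)⁻¹ * ∑ n ∈ Finset.Icc 1 N, c n * h (T^[n] x))‖
        + ‖(N : ℂ)⁻¹ * ∑ n ∈ Finset.Icc 1 N, c n * h (T^[n] x)‖ := by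
          simpa using norm_add_le
            (((N : ℂ)⁻¹ * ∑ n ∈ Finset.Icc 1 N, c n * f (T^[n] x))
              - ((N : ℂ)⁻¹ * ∑ n ∈ Finset.Icc 1 N, c n * h (T^[n] x)))
            ((N : ℂ)⁻¹ * ∑ n ∈ Finset.Icc 1 N, c n * h (T^[n] x))
    _ < B * d + ε / 2 := by exact add_lt_add_of_le_of_lt key hN2
    _ ≤ ε / 2 + ε / 2 := by linarith
    _ = ε := by ring
end

section
/- Suppose (c_n)_{n≥1} is an oscillating sequence of complex numbers. Then for any integer q ≥ 2, any r ∈ {1,2,…,q}, and any t ∈ [0,1), (1/N)·Σ_{1≤n≤N, n≡r (mod q)} c_n e^{-2πitn} → 0 as N → ∞. -/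
open Filter Finset Topology
open scoped Classical

/-! The indicator of `n ≡ r [MOD q]` is `q⁻¹ ∑_{j ∈ ℤ/q} e(j (n - r) / q)` (orthogonality of the
additive characters of `ℤ/qℤ`). Inserting it writes the restricted mean at frequency `t` as a
combination of the `q` full twisted means at the frequencies `t - j/q`; these tend to zero because
oscillation at the frequencies in `[0,1)` extends to all real frequencies by `1`-periodicity. -/

open scoped Real
open Complex

noncomputable def twistedMean (c : ℕ → ℂ) (t : ℝ) (N : ℕ) : ℂ :=
  (N : ℂ)⁻¹ * ∑ n ∈ Icc 1 N, c n * exp (-(2 * π * I * n * t))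

lemma exp_neg_two_pi_I_natCast_mul_fract (n : ℕ) (s : ℝ) :
    exp (-(2 * π * I * n * Int.fract s)) = exp (-(2 * π * I * n * s)) := by
  rw [exp_eq_exp_iff_exists_int]
  exact ⟨n * ⌊s⌋, by rw [← Int.self_sub_floor]; push_cast; ring⟩

lemma twistedMean_fract (c : ℕ → ℂ) (t : ℝ) : twistedMean c (Int.fract t) = twistedMean c t := by
  funext N
  simp only [twistedMean, exp_neg_two_pi_I_natCast_mul_fract]

lemma Oscillating.tendsto_twistedMean {c : ℕ → ℂ} (hc : Oscillating c) (t : ℝ) :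
    Tendsto (twistedMean c t) atTop (𝓝 0) :=
  twistedMean_fract c t ▸ hc _ (Int.fract_nonneg t) (Int.fract_lt_one t)

lemma ZMod.sum_stdAddChar_mul_natCast_sub (q : ℕ) [NeZero q] (n r : ℕ) :
    ∑ j : ZMod q, ZMod.stdAddChar (j * ((n : ZMod q) - (r : ZMod q))) =
      if n % q = r % q then (q : ℂ) else 0 := by
  simp only [AddChar.sum_mulShift _ (ZMod.isPrimitive_stdAddChar q), sub_eq_zero,
    ZMod.natCast_eq_natCast_iff', ZMod.card, Nat.cast_ite, Nat.cast_zero]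

lemma ZMod.stdAddChar_mul_natCast (q : ℕ) [NeZero q] (j : ZMod q) (n : ℕ) :
    ZMod.stdAddChar (j * (n : ZMod q)) = exp (2 * π * I * j.val * n / q) := by
  have := ZMod.stdAddChar_coe (N := q) (j.val * n)
  push_cast at this
  rwa [ZMod.natCast_zmod_val, ← mul_assoc] at this

lemma ZMod.stdAddChar_mul_exp_eq_shift (q : ℕ) [NeZero q] (j : ZMod q) (n r : ℕ) (t : ℝ) :
    ZMod.stdAddChar (j * ((n : ZMod q) - (r : ZMod q))) * exp (-(2 * π * I * n * t)) =
      ZMod.stdAddChar (-(j * (r : ZMod q))) * exp (-(2 * π * I * n * (t - j.val / q : ℝ))) := by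
  rw [show j * ((n : ZMod q) - (r : ZMod q)) = -(j * r) + j * n by ring, AddChar.map_add_eq_mul,
    ZMod.stdAddChar_mul_natCast, mul_assoc, ← exp_add]
  congr 2
  push_cast
  field_simp
  ring

lemma mean_filter_modEq_eq_sum_twistedMean (c : ℕ → ℂ) (q : ℕ) [NeZero q] (r : ℕ) (t : ℝ)
    (N : ℕ) :
    (N : ℂ)⁻¹ * ∑ n ∈ (Icc 1 N).filter (fun n => n % q = r % q),
        c n * exp (-(2 * π * I * n * t)) =
      (q : ℂ)⁻¹ * ∑ j : ZMod q,
        ZMod.stdAddChar (-(j * (r : ZMod q))) * twistedMean c (t - j.val / q) N := by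
  have hq : (q : ℂ) ≠ 0 := NeZero.ne _
  have hindicator : ∀ n : ℕ, (if n % q = r % q then c n * exp (-(2 * π * I * n * t)) else 0) =
      (q : ℂ)⁻¹ * ∑ j : ZMod q, ZMod.stdAddChar (-(j * (r : ZMod q))) *
        (c n * exp (-(2 * π * I * n * (t - j.val / q : ℝ)))) := by
    intro n
    simp_rw [mul_left_comm _ (c n), ← ZMod.stdAddChar_mul_exp_eq_shift, ← mul_sum, ← sum_mul,
      ZMod.sum_stdAddChar_mul_natCast_sub]
    split_ifs
    · field_simp
    · simp
  rw [sum_filter, sum_congr rfl fun n _ => hindicator n, ← mul_sum, sum_comm]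
  simp only [twistedMean, mul_sum]
  exact sum_congr rfl fun _ _ => sum_congr rfl fun _ _ => by ring

theorem oscillating_arithmetic_progression_general
    (c : ℕ → ℂ) (hosc : Oscillating c)
    (q : ℕ) (hq : 2 ≤ q) (r : ℕ)
    (t : ℝ) :
    Filter.Tendsto
      (fun N : ℕ => (N : ℂ)⁻¹ *
        ∑ n ∈ (Finset.Icc 1 N).filter (fun n => n % q = r % q),
          c n * Complex.exp (-(2 * Real.pi * Complex.I * n * t)))
      Filter.atTop (nhds 0) := by
  have : NeZero q := ⟨by omega⟩
  simp_rw [mean_filter_modEq_eq_sum_twistedMean]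
  have hsum := tendsto_finsetSum univ fun (j : ZMod q) _ =>
    (hosc.tendsto_twistedMean (t - j.val / q)).const_mul (ZMod.stdAddChar (-(j * (r : ZMod q))))
  simpa using hsum.const_mul (q : ℂ)⁻¹

/-- Arithmetic subsequences of an oscillating sequence are oscillating:
for any `q ≥ 2`, `r ∈ {1,…,q}` and `t ∈ [0,1)`, the Cesàro means of `c_n e^{-2πitn}`
restricted to `n ≡ r (mod q)` tend to zero. -/
theorem oscillating_arithmetic_progression
    (c : ℕ → ℂ) (hosc : Oscillating c)
    (q : ℕ) (hq : 2 ≤ q) (r : ℕ) (hr1 : 1 ≤ r) (hrq : r ≤ q)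
    (t : ℝ) (ht0 : 0 ≤ t) (ht1 : t < 1) :
    Filter.Tendsto
      (fun N : ℕ => (N : ℂ)⁻¹ *
        ∑ n ∈ (Finset.Icc 1 N).filter (fun n => n % q = r % q),
          c n * Complex.exp (-(2 * Real.pi * Complex.I * n * t)))
      Filter.atTop (nhds 0) :=
  oscillating_arithmetic_progression_general c hosc q hq r t
end

section
/- Let α be an irrational real number. Then the sequence c_n = e^{2πin²α} is an oscillating sequence: for every t ∈ [0,1), (1/N)·Σ_{n=1}^N e^{2πi(n²α − nt)} → 0 as N → ∞. -/
open Filter Finset Topology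
open scoped Classical

/-!
Van der Corput's difference theorem: if `‖u n‖ ≤ 1` and for every `h ≥ 1` the correlation
`u (n + h) * conj (u n)` has Cesàro mean zero, then so does `u`. Comparing `H • ∑ u n` with the
sum of the windows `∑_{p < H} u (n + p)` costs `O(H²)`; Cauchy–Schwarz and expanding the squared
windows leave `N H` from the diagonal and `o(N)` from the off-diagonal correlation sums, so the
Cesàro means of `u` are eventually at most about `H^{-1/2}`.

For `u n = e(n²α - nt)` the correlations are `e(h²α - ht) · e(2hα)ⁿ`, a geometric progression
whose ratio is not `1` because `2hα` is irrational; its partial sums are therefore bounded.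
-/

open ComplexConjugate

theorem sum_Icc_add_succ_sub_sum_Icc_add {E : Type*} [AddCommGroup E] (f : ℕ → E) (p N : ℕ) :
    ∑ n ∈ Icc 1 N, f (n + (p + 1)) - ∑ n ∈ Icc 1 N, f (n + p) = f (N + (p + 1)) - f (p + 1) := by
  induction N with
  | zero => simp
  | succ N ih =>
    rw [sum_Icc_succ_top (by omega), sum_Icc_succ_top (by omega), add_sub_add_comm, ih,
      show N + 1 + p = N + (p + 1) by ring]
    abel

theorem norm_sum_Icc_add_sub_sum_Icc_le {E : Type*} [SeminormedAddCommGroup E] {f : ℕ → E}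
    (hf : ∀ n, ‖f n‖ ≤ 1) (p N : ℕ) :
    ‖∑ n ∈ Icc 1 N, f (n + p) - ∑ n ∈ Icc 1 N, f n‖ ≤ 2 * p := by
  induction p with
  | zero => simp
  | succ p ih =>
    rw [← sub_add_sub_cancel _ (∑ n ∈ Icc 1 N, f (n + p)), sum_Icc_add_succ_sub_sum_Icc_add]
    calc _ ≤ ‖f (N + (p + 1))‖ + ‖f (p + 1)‖ + 2 * p :=
          (norm_add_le _ _).trans (add_le_add (norm_sub_le _ _) ih)
      _ ≤ 2 * ↑(p + 1) := by push_cast; linarith [hf (N + (p + 1)), hf (p + 1)]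

def correlationSum (u : ℕ → ℂ) (p q N : ℕ) : ℂ :=
  ∑ n ∈ Icc 1 N, u (n + p) * conj (u (n + q))

theorem correlationSum_comm (u : ℕ → ℂ) (p q N : ℕ) :
    correlationSum u q p N = conj (correlationSum u p q N) := by
  simp only [correlationSum, map_sum, map_mul, Complex.conj_conj, mul_comm]

section VanDerCorput

variable {u : ℕ → ℂ}

theorem norm_correlationSum_self_le (hu : ∀ n, ‖u n‖ ≤ 1) (p N : ℕ) :
    ‖correlationSum u p p N‖ ≤ N := by
  calc ‖correlationSum u p p N‖ ≤ ∑ n ∈ Icc 1 N, ‖u (n + p) * conj (u (n + p))‖ :=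
        norm_sum_le _ _
    _ ≤ ∑ n ∈ Icc 1 N, (1 : ℝ) := by
        gcongr with n
        rw [norm_mul, Complex.norm_conj]
        exact mul_le_one₀ (hu _) (norm_nonneg _) (hu _)
    _ = N := by simp

theorem norm_mul_sum_sub_sum_window_le (hu : ∀ n, ‖u n‖ ≤ 1) (H N : ℕ) :
    ‖(H : ℂ) * ∑ n ∈ Icc 1 N, u n - ∑ n ∈ Icc 1 N, ∑ p ∈ range H, u (n + p)‖ ≤ 2 * H ^ 2 := by
  rw [show (H : ℂ) * ∑ n ∈ Icc 1 N, u n = ∑ p ∈ range H, ∑ n ∈ Icc 1 N, u n by simp,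
    sum_comm (s := Icc 1 N), ← sum_sub_distrib]
  calc _ ≤ ∑ p ∈ range H, ‖∑ n ∈ Icc 1 N, u n - ∑ n ∈ Icc 1 N, u (n + p)‖ := norm_sum_le _ _
    _ ≤ ∑ p ∈ range H, 2 * (H : ℝ) := by
        gcongr with p hp
        rw [norm_sub_rev]
        exact (norm_sum_Icc_add_sub_sum_Icc_le hu p N).trans
          (by gcongr; exact (mem_range.1 hp).le)
    _ = 2 * H ^ 2 := by rw [sum_const, card_range, nsmul_eq_mul]; ring

theorem sum_norm_window_sq_le (hu : ∀ n, ‖u n‖ ≤ 1) (H N : ℕ) :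
    ∑ n ∈ Icc 1 N, ‖∑ p ∈ range H, u (n + p)‖ ^ 2 ≤
      N * H + ∑ pq ∈ (range H).offDiag, ‖correlationSum u pq.1 pq.2 N‖ := by
  have expand : ∑ n ∈ Icc 1 N, ‖∑ p ∈ range H, u (n + p)‖ ^ 2 =
      (∑ pq ∈ range H ×ˢ range H, correlationSum u pq.1 pq.2 N).re := by
    have norm_sq (z : ℂ) : ‖z‖ ^ 2 = (z * conj z).re := by
      rw [Complex.mul_conj', ← Complex.ofReal_pow, Complex.ofReal_re]
    simp only [norm_sq, map_sum, sum_mul_sum, ← Complex.re_sum, sum_product, correlationSum]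
    rw [sum_comm]
    exact congrArg Complex.re (sum_congr rfl fun p _ => sum_comm)
  rw [expand, ← diag_union_offDiag, sum_union (disjoint_diag_offDiag _), Complex.add_re, sum_diag,
    Complex.re_sum, Complex.re_sum]
  gcongr
  · calc ∑ p ∈ range H, (correlationSum u p p N).re ≤ ∑ p ∈ range H, (N : ℝ) := by
          gcongr with p
          exact (Complex.re_le_norm _).trans (norm_correlationSum_self_le hu p N)
      _ = N * H := by simp [mul_comm]
  · exact Complex.re_le_norm _

theorem vanDerCorput_inequality (hu : ∀ n, ‖u n‖ ≤ 1) (H N : ℕ) :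
    H * ‖(N : ℂ)⁻¹ * ∑ n ∈ Icc 1 N, u n‖ ≤
      √(H + (N : ℝ)⁻¹ * ∑ pq ∈ (range H).offDiag, ‖correlationSum u pq.1 pq.2 N‖) +
        2 * H ^ 2 / N := by
  rcases N.eq_zero_or_pos with rfl | hN
  · simp only [CharP.cast_eq_zero, inv_zero, zero_mul, norm_zero, mul_zero, div_zero, add_zero]
    positivity
  set R := ∑ pq ∈ (range H).offDiag, ‖correlationSum u pq.1 pq.2 N‖
  have cauchy_schwarz :
      (N : ℝ)⁻¹ * ∑ n ∈ Icc 1 N, ‖∑ p ∈ range H, u (n + p)‖ ≤ √(H + (N : ℝ)⁻¹ * R) := by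
    refine Real.le_sqrt_of_sq_le ?_
    have := sq_sum_le_card_mul_sum_sq (s := Icc 1 N) (f := fun n => ‖∑ p ∈ range H, u (n + p)‖)
    rw [Nat.card_Icc, add_tsub_cancel_right] at this
    have window := sum_norm_window_sq_le hu H N
    calc _ = (N : ℝ)⁻¹ ^ 2 * (∑ n ∈ Icc 1 N, ‖∑ p ∈ range H, u (n + p)‖) ^ 2 := by ring
      _ ≤ (N : ℝ)⁻¹ ^ 2 * (N * (N * H + R)) := by gcongr; exact this.trans (by gcongr)
      _ = H + (N : ℝ)⁻¹ * R := by field_simp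
  calc H * ‖(N : ℂ)⁻¹ * ∑ n ∈ Icc 1 N, u n‖ = (N : ℝ)⁻¹ * ‖(H : ℂ) * ∑ n ∈ Icc 1 N, u n‖ := by
        simp only [norm_mul, norm_inv, Complex.norm_natCast]; ring
    _ ≤ (N : ℝ)⁻¹ * (∑ n ∈ Icc 1 N, ‖∑ p ∈ range H, u (n + p)‖ + 2 * H ^ 2) := by
        gcongr
        exact (norm_le_norm_add_norm_sub' _ _).trans
          (add_le_add (norm_sum_le _ _) (norm_mul_sum_sub_sum_window_le hu H N))
    _ ≤ _ := by rw [mul_add, div_eq_inv_mul]; gcongr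

theorem tendsto_inv_mul_norm_correlationSum (hu : ∀ n, ‖u n‖ ≤ 1)
    (hcorr : ∀ h, 0 < h → Tendsto (fun N : ℕ => (N : ℂ)⁻¹ * ∑ n ∈ Icc 1 N, u (n + h) * conj (u n))
      atTop (𝓝 0))
    {p q : ℕ} (hpq : p ≠ q) :
    Tendsto (fun N : ℕ => (N : ℝ)⁻¹ * ‖correlationSum u p q N‖) atTop (𝓝 0) := by
  wlog hqp : q < p generalizing p q
  · simpa only [correlationSum_comm u q p, Complex.norm_conj] using
      this hpq.symm (by omega)
  obtain ⟨h, rfl⟩ := Nat.exists_eq_add_of_lt hqp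
  set w : ℕ → ℂ := fun n => u (n + (h + 1)) * conj (u n)
  have hw : ∀ n, ‖w n‖ ≤ 1 := fun n => by
    simp only [w, norm_mul, Complex.norm_conj]
    exact mul_le_one₀ (hu _) (norm_nonneg _) (hu _)
  have shift (N : ℕ) : correlationSum u (q + h + 1) q N = ∑ n ∈ Icc 1 N, w (n + q) := by
    simp only [correlationSum, w]
    exact sum_congr rfl fun n _ => by ring_nf
  have bound (N : ℕ) : (N : ℝ)⁻¹ * ‖correlationSum u (q + h + 1) q N‖ ≤
      ‖(N : ℂ)⁻¹ * ∑ n ∈ Icc 1 N, w n‖ + 2 * q / N := by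
    rw [norm_mul, norm_inv, Complex.norm_natCast, div_eq_inv_mul, ← mul_add, shift]
    gcongr
    exact (norm_le_norm_add_norm_sub' _ _).trans
      (add_le_add_right (norm_sum_Icc_add_sub_sum_Icc_le hw q N) _)
  have hw0 := (tendsto_zero_iff_norm_tendsto_zero.1 (hcorr (h + 1) h.succ_pos)).add
    (tendsto_const_div_atTop_nhds_zero_nat (2 * q : ℝ))
  rw [add_zero] at hw0
  exact squeeze_zero (fun N => by positivity) bound hw0

theorem tendsto_inv_mul_sum_of_tendsto_correlation (hu : ∀ n, ‖u n‖ ≤ 1)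
    (hcorr : ∀ h, 0 < h → Tendsto (fun N : ℕ => (N : ℂ)⁻¹ * ∑ n ∈ Icc 1 N, u (n + h) * conj (u n))
      atTop (𝓝 0)) :
    Tendsto (fun N : ℕ => (N : ℂ)⁻¹ * ∑ n ∈ Icc 1 N, u n) atTop (𝓝 0) := by
  rw [NormedAddGroup.tendsto_nhds_zero]
  intro ε hε
  obtain ⟨H, hH⟩ := exists_nat_gt (1 / ε ^ 2)
  have hH0 : (0 : ℝ) < H := lt_trans (by positivity) hH
  have hlim : Tendsto (fun N : ℕ => √(H + (N : ℝ)⁻¹ *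
      ∑ pq ∈ (range H).offDiag, ‖correlationSum u pq.1 pq.2 N‖) + 2 * H ^ 2 / N)
      atTop (𝓝 (√H)) := by
    have hR : Tendsto (fun N : ℕ => (N : ℝ)⁻¹ *
        ∑ pq ∈ (range H).offDiag, ‖correlationSum u pq.1 pq.2 N‖) atTop (𝓝 0) := by
      simp_rw [mul_sum]
      simpa using tendsto_finsetSum _ fun pq hpq =>
        tendsto_inv_mul_norm_correlationSum hu hcorr (mem_offDiag.1 hpq).2.2
    simpa using ((hR.const_add (H : ℝ)).sqrt).add (tendsto_const_div_atTop_nhds_zero_nat _)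
  have hsqrt : √H < H * ε := by
    rw [Real.sqrt_lt' (by positivity)]
    rw [div_lt_iff₀ (by positivity)] at hH
    nlinarith
  filter_upwards [hlim.eventually_lt_const hsqrt] with N hN
  exact lt_of_mul_lt_mul_left ((vanDerCorput_inequality hu H N).trans_lt hN) hH0.le

end VanDerCorput

theorem norm_sum_Icc_pow_le {z : ℂ} (hz : ‖z‖ ≤ 1) (hz1 : z ≠ 1) (N : ℕ) :
    ‖∑ n ∈ Icc 1 N, z ^ n‖ ≤ 2 / ‖z - 1‖ := by
  rw [← Ico_add_one_right_eq_Icc, geom_sum_Ico hz1 (by omega), norm_div]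
  gcongr
  calc ‖z ^ (N + 1) - z ^ 1‖ ≤ ‖z ^ (N + 1)‖ + ‖z ^ 1‖ := norm_sub_le _ _
    _ ≤ 2 := by
        rw [norm_pow, norm_pow]
        linarith [pow_le_one₀ (norm_nonneg z) hz (n := N + 1),
          pow_le_one₀ (norm_nonneg z) hz (n := 1)]

theorem tendsto_inv_mul_sum_Icc_pow {z : ℂ} (hz : ‖z‖ ≤ 1) (hz1 : z ≠ 1) :
    Tendsto (fun N : ℕ => (N : ℂ)⁻¹ * ∑ n ∈ Icc 1 N, z ^ n) atTop (𝓝 0) := by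
  refine squeeze_zero_norm (fun N => ?_) (tendsto_const_div_atTop_nhds_zero_nat (2 / ‖z - 1‖))
  rw [norm_mul, norm_inv, Complex.norm_natCast, div_eq_inv_mul]
  gcongr
  exact norm_sum_Icc_pow_le hz hz1 N

section QuadraticPhase

open Real FourierTransform

theorem Irrational.fourierChar_ne_one {x : ℝ} (hx : Irrational x) : 𝐞 x ≠ 1 := by
  rw [fourierChar_apply', Ne, Circle.exp_eq_one]
  rintro ⟨n, hn⟩
  exact hx.ne_int n (by nlinarith [pi_pos])

theorem fourierChar_quadratic_mul_inv (α t : ℝ) (h n : ℕ) :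
    𝐞 ((↑(n + h) : ℝ) ^ 2 * α - ↑(n + h) * t) * (𝐞 ((n : ℝ) ^ 2 * α - n * t))⁻¹ =
      𝐞 ((h : ℝ) ^ 2 * α - h * t) * 𝐞 (2 * h * α) ^ n := by
  rw [← AddChar.map_nsmul_eq_pow, ← AddChar.map_neg_eq_inv, ← AddChar.map_add_eq_mul,
    ← AddChar.map_add_eq_mul, nsmul_eq_mul]
  congr 1
  push_cast
  ring

theorem tendsto_inv_mul_sum_fourierChar_quadratic {α : ℝ} (hα : Irrational α) (t : ℝ) :
    Tendsto (fun N : ℕ => (N : ℂ)⁻¹ * ∑ n ∈ Icc 1 N, (𝐞 ((n : ℝ) ^ 2 * α - n * t) : ℂ))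
      atTop (𝓝 0) := by
  refine tendsto_inv_mul_sum_of_tendsto_correlation (fun n => (Circle.norm_coe _).le)
    fun h hh => ?_
  set c : ℂ := (𝐞 ((h : ℝ) ^ 2 * α - h * t) : ℂ)
  set z : Circle := 𝐞 (2 * h * α)
  have hz : (z : ℂ) ≠ 1 := by
    have := (hα.natCast_mul (by omega : 2 * h ≠ 0)).fourierChar_ne_one
    push_cast at this
    exact mt Circle.coe_eq_one.1 this
  have correlation (n : ℕ) : (𝐞 ((↑(n + h) : ℝ) ^ 2 * α - ↑(n + h) * t) : ℂ) *
      conj (𝐞 ((n : ℝ) ^ 2 * α - n * t) : ℂ) = c * (z : ℂ) ^ n := by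
    rw [← Circle.coe_inv_eq_conj, ← Circle.coe_mul, fourierChar_quadratic_mul_inv, Circle.coe_mul,
      Circle.coe_pow]
  simp only [correlation, ← mul_sum, mul_left_comm _ c]
  simpa using (tendsto_inv_mul_sum_Icc_pow (Circle.norm_coe z).le hz).const_mul c

end QuadraticPhase

/-- For irrational `α`, the sequence `c_n = e^{2πin²α}` is oscillating. -/
theorem quadratic_irrational_oscillating (α : ℝ) (hα : Irrational α) :
    Oscillating (fun n : ℕ => Complex.exp (2 * Real.pi * Complex.I * (n : ℂ) ^ 2 * α)) := by
  intro t _ _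
  convert tendsto_inv_mul_sum_fourierChar_quadratic hα t using 4 with N n
  rw [Real.fourierChar_apply, ← Complex.exp_add]
  push_cast
  ring_nf
end

section
/- Let p be a prime number and let ℤ_p be the ring of p-adic integers with the metric induced by the p-adic norm. Let P be a polynomial with coefficients in ℤ_p; then x ↦ P(x) is a continuous self-map of the compact metric space ℤ_p. Any oscillating sequence (c_n)_{n≥1} satisfying the growth condition is linearly disjoint from the flow (ℤ_p, P): for every continuous function f : ℤ_p → ℂ and every x ∈ ℤ_p, (1/N)·Σ_{n=1}^N c_n f(Pⁿ(x)) → 0 as N → ∞, where Pⁿ denotes the n-th iterate of x ↦ P(x). -/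
/-!
The map `T : x ↦ P x` is `1`-Lipschitz on `ℤ_p`, and `ℤ_p` is a compact ultrametric space.
By compactness two points `T^[i] x`, `T^[j] x` of an orbit are `δ`-close; since `T` does not
expand distances and the ultrametric inequality prevents errors from accumulating, the whole
orbit from some time on stays `δ`-close to the periodic pattern of period `j - i`. Hence
`n ↦ f (T^[n] x)` is uniformly approximated, for large `n`, by periodic sequences. A periodic
sequence is a finite combination of characters `n ↦ exp (2πi k n / q)` (discrete Fourier
inversion on `ZMod q`), so its weighted means against an oscillating `c` tend to zero, and the
growth condition (through `∑ |c n| = O(N)`) controls the approximation error.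
-/

open Filter Finset Topology
open scoped Classical

noncomputable def weightedMean (c g : ℕ → ℂ) (N : ℕ) : ℂ :=
  (N : ℂ)⁻¹ * ∑ n ∈ Icc 1 N, c n * g n

open ZMod in
theorem Function.Periodic.eq_sum_stdAddChar {h : ℕ → ℂ} {q : ℕ} [NeZero q]
    (hper : Function.Periodic h q) (n : ℕ) :
    h n = ∑ j : ZMod q,
      (q : ℂ)⁻¹ * 𝓕 (fun k : ZMod q => h k.val) j * stdAddChar (j * (n : ZMod q)) := by
  have hinv := congr_fun (dft.symm_apply_apply fun k : ZMod q => h k.val) (n : ZMod q)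
  rw [invDFT_apply, ZMod.val_natCast, hper.map_mod_nat, smul_eq_mul, Finset.mul_sum] at hinv
  rw [← hinv]
  exact Finset.sum_congr rfl fun j _ => by rw [smul_eq_mul]; ring

namespace Oscillating

theorem tendsto_weightedMean_stdAddChar {c : ℕ → ℂ} (hosc : Oscillating c) {q : ℕ} [NeZero q]
    (j : ZMod q) :
    Tendsto (weightedMean c fun n => ZMod.stdAddChar (j * (n : ZMod q))) atTop (𝓝 0) := by
  set v : ℕ := (-j).val
  have hv : (v : ℝ) / q < 1 :=
    (div_lt_one (by simp [Nat.pos_of_ne_zero (NeZero.ne q)])).2 (by exact_mod_cast ZMod.val_lt _)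
  refine (hosc _ (by positivity) hv).congr fun N => ?_
  unfold weightedMean
  refine congrArg _ (Finset.sum_congr rfl fun n _ => congrArg _ ?_)
  dsimp only
  have hjn : j * (n : ZMod q) = ((-((v * n : ℕ) : ℤ) : ℤ) : ZMod q) := by
    push_cast
    rw [ZMod.natCast_zmod_val]
    ring
  rw [hjn, ZMod.stdAddChar_coe]
  congr 1
  push_cast
  ring

theorem tendsto_weightedMean_of_periodic {c : ℕ → ℂ} (hosc : Oscillating c) {h : ℕ → ℂ} {q : ℕ}
    (hq : q ≠ 0) (hper : Function.Periodic h q) :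
    Tendsto (weightedMean c h) atTop (𝓝 0) := by
  have : NeZero q := ⟨hq⟩
  set b : ZMod q → ℂ := fun j => (q : ℂ)⁻¹ * ZMod.dft (fun k : ZMod q => h k.val) j
  have hexpand : ∀ N, weightedMean c h N =
      ∑ j, b j * weightedMean c (fun n => ZMod.stdAddChar (j * (n : ZMod q))) N := by
    intro N
    simp only [weightedMean, Finset.mul_sum]
    rw [Finset.sum_comm]
    refine Finset.sum_congr rfl fun n _ => ?_
    rw [hper.eq_sum_stdAddChar n, Finset.mul_sum, Finset.mul_sum]
    exact Finset.sum_congr rfl fun j _ => by ring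
  rw [funext hexpand]
  simpa using tendsto_finsetSum Finset.univ fun j _ =>
    (hosc.tendsto_weightedMean_stdAddChar j).const_mul (b j)

end Oscillating

theorem GrowthCondition.exists_sum_norm_le {c : ℕ → ℂ} (hc : GrowthCondition c) :
    ∃ C : ℝ, ∀ N : ℕ, ∑ n ∈ Icc 1 N, ‖c n‖ ≤ C * N := by
  obtain ⟨lam, hlam, C, hC⟩ := hc
  have hle : ∀ n, ‖c n‖ ≤ ‖c n‖ ^ lam + 1 := by
    intro n
    rcases le_or_gt ‖c n‖ 1 with h1 | h1
    · linarith [Real.rpow_nonneg (norm_nonneg (c n)) lam]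
    · linarith [Real.self_le_rpow_of_one_le h1.le hlam.le]
  refine ⟨C + 1, fun N => ?_⟩
  calc ∑ n ∈ Icc 1 N, ‖c n‖ ≤ ∑ n ∈ Icc 1 N, (‖c n‖ ^ lam + 1) := sum_le_sum fun n _ => hle n
    _ = ∑ n ∈ Icc 1 N, ‖c n‖ ^ lam + N := by simp [sum_add_distrib]
    _ ≤ (C + 1) * N := by linarith [hC N]

theorem norm_weightedMean_sub_le (c g h : ℕ → ℂ) (N : ℕ) :
    ‖weightedMean c g N - weightedMean c h N‖ ≤
      (N : ℝ)⁻¹ * ∑ n ∈ Icc 1 N, ‖c n‖ * ‖g n - h n‖ := by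
  rw [weightedMean, weightedMean, ← mul_sub, ← sum_sub_distrib, norm_mul, norm_inv,
    Complex.norm_natCast]
  gcongr
  refine (norm_sum_le _ _).trans_eq (sum_congr rfl fun n _ => ?_)
  rw [← mul_sub, norm_mul]

theorem sum_norm_mul_le_of_forall_ge {c u : ℕ → ℂ} {C ε : ℝ} {m : ℕ}
    (hC : ∀ N : ℕ, ∑ n ∈ Icc 1 N, ‖c n‖ ≤ C * N) (hε : 0 ≤ ε) (hu : ∀ n ≥ m, ‖u n‖ ≤ ε)
    (N : ℕ) :
    ∑ n ∈ Icc 1 N, ‖c n‖ * ‖u n‖ ≤ ∑ n ∈ range m, ‖c n‖ * ‖u n‖ + ε * (C * N) := by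
  rw [← sum_filter_add_sum_filter_not _ (· < m)]
  gcongr
  · intro n hn
    simpa using (mem_filter.1 hn).2
  · calc ∑ n ∈ Icc 1 N with ¬n < m, ‖c n‖ * ‖u n‖
        ≤ ∑ n ∈ Icc 1 N with ¬n < m, ε * ‖c n‖ := sum_le_sum fun n hn => by
          rw [mul_comm ε]
          exact mul_le_mul_of_nonneg_left (hu n (not_lt.1 (mem_filter.1 hn).2)) (norm_nonneg _)
      _ ≤ ε * ∑ n ∈ Icc 1 N, ‖c n‖ := by
          rw [← mul_sum]
          gcongr
          exact filter_subset _ _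
      _ ≤ ε * (C * N) := by gcongr; exact hC N

theorem tendsto_weightedMean_of_approx {c g : ℕ → ℂ} {C : ℝ}
    (hC : ∀ N : ℕ, ∑ n ∈ Icc 1 N, ‖c n‖ ≤ C * N)
    (happrox : ∀ ε > 0, ∃ h : ℕ → ℂ, Tendsto (weightedMean c h) atTop (𝓝 0) ∧
      ∀ᶠ n in atTop, ‖g n - h n‖ ≤ ε) :
    Tendsto (weightedMean c g) atTop (𝓝 0) := by
  have hC0 : 0 ≤ C := by simpa using (norm_nonneg (c 1)).trans (by simpa using hC 1)
  rw [Metric.tendsto_nhds]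
  intro η hη
  set ε := η / (3 * (C + 1))
  have hεC : ε * C < η / 3 := by
    rw [div_mul_eq_mul_div, div_lt_div_iff₀ (by positivity) (by positivity)]
    nlinarith
  obtain ⟨h, hh, hgh⟩ := happrox ε (by positivity)
  obtain ⟨m, hm⟩ := eventually_atTop.1 hgh
  set K := ∑ n ∈ range m, ‖c n‖ * ‖g n - h n‖
  have hdiff (N : ℕ) (hN : 0 < N) :
      ‖weightedMean c g N - weightedMean c h N‖ ≤ (N : ℝ)⁻¹ * K + ε * C := by
    calc ‖weightedMean c g N - weightedMean c h N‖
        ≤ (N : ℝ)⁻¹ * (K + ε * (C * N)) := by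
          refine (norm_weightedMean_sub_le c g h N).trans ?_
          gcongr
          exact sum_norm_mul_le_of_forall_ge hC (by positivity) hm N
      _ = (N : ℝ)⁻¹ * K + ε * C := by field_simp
  have hK : Tendsto (fun N : ℕ => (N : ℝ)⁻¹ * K) atTop (𝓝 0) := by
    simpa using tendsto_inv_atTop_nhds_zero_nat.mul_const K
  have hη3 : (0 : ℝ) < η / 3 := by positivity
  filter_upwards [hh.norm.eventually (gt_mem_nhds (show ‖(0 : ℂ)‖ < η / 3 by simpa using hη3)),
    hK.eventually (gt_mem_nhds hη3), eventually_gt_atTop 0] with N h₁ h₂ hN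
  rw [dist_zero_right]
  linarith [norm_le_norm_sub_add (weightedMean c g N) (weightedMean c h N), hdiff N hN]

theorem exists_lt_dist_lt_of_compactSpace {X : Type*} [PseudoMetricSpace X] [CompactSpace X]
    (u : ℕ → X) {δ : ℝ} (hδ : 0 < δ) : ∃ i j, i < j ∧ dist (u j) (u i) < δ := by
  obtain ⟨_, _, φ, hφ, hlim⟩ := isCompact_univ.tendsto_subseq fun n => Set.mem_univ (u n)
  obtain ⟨N, hN⟩ := Metric.cauchySeq_iff'.1 hlim.cauchySeq δ hδ
  exact ⟨φ N, φ (N + 1), hφ N.lt_succ_self, hN (N + 1) N.le_succ⟩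

namespace LipschitzWith

variable {X : Type*} [PseudoMetricSpace X] {T : X → X}

theorem dist_iterate_le (hT : LipschitzWith 1 T) (n : ℕ) (x y : X) :
    dist (T^[n] x) (T^[n] y) ≤ dist x y := by
  simpa using (hT.iterate n).dist_le_mul x y

variable [IsUltrametricDist X]

theorem dist_iterate_mul_lt (hT : LipschitzWith 1 T) {y : X} {q : ℕ} {δ : ℝ}
    (hy : dist (T^[q] y) y < δ) (k : ℕ) : dist (T^[k * q] y) y < δ := by
  induction k with
  | zero => simpa using dist_nonneg.trans_lt hy
  | succ k ih =>
    have hstep : dist (T^[(k + 1) * q] y) (T^[k * q] y) ≤ dist (T^[q] y) y := by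
      rw [add_one_mul, Function.iterate_add_apply]
      exact hT.dist_iterate_le _ _ _
    exact (dist_triangle_max _ _ _).trans_lt (max_lt (hstep.trans_lt hy) ih)

theorem exists_dist_iterate_mod_lt [CompactSpace X] (hT : LipschitzWith 1 T) (x : X) {δ : ℝ}
    (hδ : 0 < δ) : ∃ q, q ≠ 0 ∧ ∃ m, ∀ n ≥ m, dist (T^[n] x) (T^[m + n % q] x) < δ := by
  obtain ⟨i, j, hij, hdist⟩ := exists_lt_dist_lt_of_compactSpace (T^[·] x) hδ
  obtain ⟨q, hq, rfl⟩ : ∃ q, 0 < q ∧ j = i + q := ⟨j - i, by omega, by omega⟩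
  have him : i ≤ q * i := Nat.le_mul_of_pos_left i hq
  have hm : dist (T^[q] (T^[q * i] x)) (T^[q * i] x) < δ := by
    refine lt_of_eq_of_lt ?_ ((hT.dist_iterate_le (q * i - i) _ _).trans_lt hdist)
    simp only [← Function.iterate_add_apply]
    congr 2 <;> omega
  refine ⟨q, hq.ne', q * i, fun n hn => ?_⟩
  obtain ⟨d, hd⟩ : ∃ d, n / q = i + d :=
    Nat.exists_eq_add_of_le ((Nat.le_div_iff_mul_le hq).2 (by linarith [mul_comm q i]))
  have hn_eq : T^[n] x = T^[n % q] (T^[d * q] (T^[q * i] x)) := by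
    simp only [← Function.iterate_add_apply]
    congr 1
    have := Nat.mod_add_div n q
    rw [hd] at this
    linarith [mul_comm q d]
  rw [hn_eq, add_comm, Function.iterate_add_apply]
  exact (hT.dist_iterate_le _ _ _).trans_lt (hT.dist_iterate_mul_lt hm d)

end LipschitzWith

theorem PadicInt.lipschitzWith_one_eval {p : ℕ} [Fact p.Prime] (P : Polynomial ℤ_[p]) :
    LipschitzWith 1 fun x : ℤ_[p] => P.eval x := by
  refine LipschitzWith.of_dist_le_mul fun a b => ?_
  obtain ⟨k, hk⟩ := Polynomial.sub_dvd_eval_sub a b P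
  rw [NNReal.coe_one, one_mul, dist_eq_norm, dist_eq_norm, hk, norm_mul]
  exact mul_le_of_le_one_right (norm_nonneg _) k.norm_le_one

/-- Polynomials over the `p`-adic integers define continuous self-maps of
the compact metric space `ℤ_p`, and every oscillating sequence satisfying the growth
condition is linearly disjoint from the resulting flow. -/
theorem oscillating_linearlyDisjoint_padic_polynomial
    (p : ℕ) [Fact p.Prime] (P : Polynomial ℤ_[p])
    (c : ℕ → ℂ) (hosc : Oscillating c) (hgrowth : GrowthCondition c) :
    Continuous (fun x : ℤ_[p] => P.eval x) ∧
      LinearlyDisjoint c (fun x : ℤ_[p] => P.eval x) := by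
  have hT := PadicInt.lipschitzWith_one_eval P
  refine ⟨hT.continuous, fun f x => ?_⟩
  obtain ⟨C, hC⟩ := hgrowth.exists_sum_norm_le
  refine tendsto_weightedMean_of_approx hC fun ε hε => ?_
  obtain ⟨δ, hδ, hf⟩ := Metric.uniformContinuous_iff.1
    (CompactSpace.uniformContinuous_of_continuous f.continuous) ε hε
  obtain ⟨q, hq, m, hm⟩ := hT.exists_dist_iterate_mod_lt x hδ
  refine ⟨fun n => f ((fun x => P.eval x)^[m + n % q] x), ?_, ?_⟩
  · exact hosc.tendsto_weightedMean_of_periodic hq fun n => by simp only [Nat.add_mod_right]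
  · exact eventually_atTop.2 ⟨m, fun n hn => by simpa [dist_eq_norm] using (hf (hm n hn)).le⟩
end

section
/- Let M be a 2×2 integer matrix with det M = 1 having 1 (respectively −1) as a double eigenvalue, i.e., having characteristic polynomial (x−1)² (respectively (x+1)²). Then there exist a 2×2 integer matrix P with det P = 1 and an integer t such that P⁻¹MP = T_t (respectively P⁻¹MP = −T_t), where T_t is the matrix with rows (1, t) and (0, 1). -/
/-!
An eigenvector for the eigenvalue `ε = ±1` can be divided by the gcd of its entries, and the
resulting primitive vector is the first column of some `P` of determinant `1`. Then `P⁻¹ M P`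
maps `e₁` to `ε e₁`, so it is upper triangular with top-left entry `ε`; its determinant `1` forces
the bottom-right entry to be `ε⁻¹ = ε`.
-/

open Matrix Polynomial

variable {R : Type*}

namespace Matrix

theorem exists_mulVec_eq_smul_of_isRoot_charpoly [CommRing R] [IsDomain R] {n : Type*}
    [Fintype n] [DecidableEq n] {M : Matrix n n R} {ε : R} (h : M.charpoly.IsRoot ε) :
    ∃ v ≠ 0, M *ᵥ v = ε • v := by
  have hdet : (scalar n ε - M).det = 0 := by rw [← eval_charpoly]; exact h
  obtain ⟨v, hv0, hv⟩ := exists_mulVec_eq_zero_iff.mpr hdet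
  refine ⟨v, hv0, ?_⟩
  rw [sub_mulVec, sub_eq_zero, scalar_apply, ← smul_one_eq_diagonal, smul_mulVec,
    one_mulVec] at hv
  exact hv.symm

theorem exists_isCoprime_of_mulVec_eq_smul [EuclideanDomain R] [GCDMonoid R]
    {M : Matrix (Fin 2) (Fin 2) R} {ε : R} {v : Fin 2 → R} (hv0 : v ≠ 0) (hv : M *ᵥ v = ε • v) :
    ∃ w : Fin 2 → R, IsCoprime (w 0) (w 1) ∧ M *ᵥ w = ε • w := by
  set g := GCDMonoid.gcd (v 0) (v 1)
  have hg : g ≠ 0 := by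
    intro hg
    obtain ⟨h0, h1⟩ := (gcd_eq_zero_iff _ _).mp hg
    exact hv0 (funext fun i => by fin_cases i <;> assumption)
  have hvw : v = g • fun i => v i / g := funext fun i => by
    fin_cases i
    exacts [(EuclideanDomain.mul_div_cancel' hg (gcd_dvd_left _ _)).symm,
      (EuclideanDomain.mul_div_cancel' hg (gcd_dvd_right _ _)).symm]
  refine ⟨fun i => v i / g, isCoprime_div_gcd_div_gcd_of_gcd_ne_zero hg, ?_⟩
  rw [hvw, mulVec_smul, smul_comm] at hv
  exact smul_right_injective _ hg hv

end Matrix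

theorem IsCoprime.exists_det_eq_one_mulVec_single_zero [CommRing R] {v : Fin 2 → R}
    (hv : IsCoprime (v 0) (v 1)) :
    ∃ P : Matrix (Fin 2) (Fin 2) R, P.det = 1 ∧ P *ᵥ Pi.single 0 1 = v := by
  obtain ⟨g, hg0, hg1⟩ := hv.exists_SL2_col 0
  refine ⟨g, g.2, funext fun i => ?_⟩
  fin_cases i <;> simp [hg0, hg1]

namespace Matrix

theorem conj_mulVec_single_eq_smul [CommRing R] {n : Type*} [Fintype n] [DecidableEq n]
    {M P : Matrix n n R} (hP : IsUnit P.det) {j : n} {ε : R}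
    (hv : M *ᵥ (P *ᵥ Pi.single j 1) = ε • (P *ᵥ Pi.single j 1)) :
    (P⁻¹ * M * P) *ᵥ Pi.single j 1 = ε • Pi.single j 1 := by
  rw [← mulVec_mulVec, ← mulVec_mulVec, hv, mulVec_smul, mulVec_mulVec, nonsing_inv_mul _ hP,
    one_mulVec]

theorem eq_smul_of_mulVec_single_zero [CommRing R] {N : Matrix (Fin 2) (Fin 2) R} {ε : R}
    (hε : ε * ε = 1) (hdet : N.det = 1) (hN : N *ᵥ Pi.single 0 1 = ε • Pi.single 0 1) :
    N = ε • !![1, ε * N 0 1; 0, 1] := by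
  have h00 : N 0 0 = ε := by simpa using congrFun hN 0
  have h10 : N 1 0 = 0 := by simpa using congrFun hN 1
  have h11 : N 1 1 = ε := by
    rw [det_fin_two, h00, h10] at hdet
    linear_combination ε * hdet - N 1 1 * hε
  ext i j
  fin_cases i <;> fin_cases j <;> simp [h00, h10, h11, ← mul_assoc, hε]

theorem exists_conj_eq_smul_of_isRoot_charpoly [EuclideanDomain R] [GCDMonoid R]
    {M : Matrix (Fin 2) (Fin 2) R} {ε : R} (hε : ε * ε = 1) (hdet : M.det = 1)
    (hroot : M.charpoly.IsRoot ε) :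
    ∃ (P : Matrix (Fin 2) (Fin 2) R) (t : R), P.det = 1 ∧ P⁻¹ * M * P = ε • !![1, t; 0, 1] := by
  obtain ⟨v, hv0, hv⟩ := exists_mulVec_eq_smul_of_isRoot_charpoly hroot
  obtain ⟨w, hw, hMw⟩ := exists_isCoprime_of_mulVec_eq_smul hv0 hv
  obtain ⟨P, hPdet, hPw⟩ := hw.exists_det_eq_one_mulVec_single_zero
  have hP : IsUnit P.det := hPdet ▸ isUnit_one
  refine ⟨P, ε * (P⁻¹ * M * P) 0 1, hPdet, eq_smul_of_mulVec_single_zero hε ?_ ?_⟩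
  · rw [det_conj' ((isUnit_iff_isUnit_det P).mpr hP), hdet]
  · exact conj_mulVec_single_eq_smul hP (hPw ▸ hMw)

end Matrix

/-- A modular matrix (`2×2` integer matrix of determinant `1`) with `1`
(resp. `-1`) as a double eigenvalue is conjugate, by a modular matrix, to `T_t = !![1,t;0,1]`
(resp. to `-T_t`) for some integer `t`. -/
theorem modular_double_eigenvalue_conjugate
    (M : Matrix (Fin 2) (Fin 2) ℤ) (hdet : M.det = 1) :
    (M.charpoly = (X - 1) ^ 2 →
      ∃ (P : Matrix (Fin 2) (Fin 2) ℤ) (t : ℤ),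
        P.det = 1 ∧ P⁻¹ * M * P = !![1, t; 0, 1]) ∧
    (M.charpoly = (X + 1) ^ 2 →
      ∃ (P : Matrix (Fin 2) (Fin 2) ℤ) (t : ℤ),
        P.det = 1 ∧ P⁻¹ * M * P = -(!![1, t; 0, 1])) := by
  refine ⟨fun h => ?_, fun h => ?_⟩
  · simpa using exists_conj_eq_smul_of_isRoot_charpoly (mul_one 1) hdet (by simp [h])
  · simpa using exists_conj_eq_smul_of_isRoot_charpoly (ε := -1) (by norm_num) hdet (by simp [h])
end

section
/- Let A be a 2×2 integer matrix with det A = ±1 all of whose eigenvalues have modulus 1. Then the flow (𝕋², T) with T(x) = Ax is minimally mean attractable (MMA) and minimally mean-L-stable (MMLS). -/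
/-!
An integer matrix of determinant `±1` whose eigenvalues lie on the unit circle has
characteristic polynomial `X² - tX + d` with `|t| ≤ 2`, and `t = 0` if `d = -1`. In each case it
divides `(X - σ)(X^m - 1)` for some `m ≥ 1` and sign `σ` with `σ^m = 1`, so with `b = (A^m - 1) x`
we get `A^m x = x + b`, `A b = σ b`, and hence `A^(mk + r) x = A^r x + k σ^r b`.
In the compact group `𝕋²` the natural multiples of `b` are dense in `G = closure ℤb`, so the
orbit closure of `x` is the finite union of cosets `A^r x + G` (`r < m`) and every point of it has
a dense orbit: orbit closures are minimal, and `x` is trivially mean attracted to its own.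
Two close points of such a union lie in the same coset of `G`, on which `A` acts as the
isometry `±1`, so their distance never changes: the restriction is mean-L-stable.
-/

open Filter Finset Topology
open scoped Classical

/-- The integer lattice `ℤ²` inside the Euclidean plane, generated by the standard basis. -/
noncomputable def torusLattice : AddSubgroup (EuclideanSpace ℝ (Fin 2)) :=
  AddSubgroup.closure (Set.range fun i : Fin 2 => EuclideanSpace.single i (1 : ℝ))

/-- The 2-torus `𝕋² = ℝ²/ℤ²`, equipped with the quotient (semi)norm
`‖x‖_{𝕋²} = inf_{n ∈ ℤ²} ‖x - n‖_{ℝ²}`. -/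
abbrev Torus2 : Type := EuclideanSpace ℝ (Fin 2) ⧸ torusLattice

/-- The linear action of a `2×2` integer matrix on the Euclidean plane. -/
noncomputable def matAction (A : Matrix (Fin 2) (Fin 2) ℤ) (v : EuclideanSpace ℝ (Fin 2)) :
    EuclideanSpace ℝ (Fin 2) :=
  (WithLp.equiv 2 (Fin 2 → ℝ)).symm
    ((A.map (Int.cast : ℤ → ℝ)).mulVec (WithLp.equiv 2 (Fin 2 → ℝ) v))

/-- `A` is diagonalizable over `ℂ`. -/
def DiagonalizableOverC (A : Matrix (Fin 2) (Fin 2) ℤ) : Prop :=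
  ∃ P : Matrix (Fin 2) (Fin 2) ℂ, IsUnit P.det ∧
    (P⁻¹ * A.map (Int.cast : ℤ → ℂ) * P).IsDiag

/-- All (complex) eigenvalues of `A` have modulus `1`. -/
def EigenvaluesModulusOne (A : Matrix (Fin 2) (Fin 2) ℤ) : Prop :=
  ∀ μ ∈ (A.map (Int.cast : ℤ → ℂ)).charpoly.roots, ‖μ‖ = 1


open Function Set

section CompactRecurrence

variable {X : Type*} [SeminormedAddCommGroup X] [CompactSpace X]

theorem exists_nsmul_norm_lt (b : X) {δ : ℝ} (hδ : 0 < δ) (M : ℕ) :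
    ∃ k, M ≤ k ∧ ‖k • b‖ < δ := by
  -- two consecutive terms of a convergent subsequence of `j ↦ j • (M + 1) • b` are close
  obtain ⟨_, φ, hφ, hlim⟩ := CompactSpace.tendsto_subseq (fun j : ℕ => j • (M + 1) • b)
  obtain ⟨N, hN⟩ := Metric.cauchySeq_iff'.mp hlim.cauchySeq δ hδ
  specialize hN (N + 1) N.le_succ
  have hlt : φ N < φ (N + 1) := hφ N.lt_succ_self
  refine ⟨(φ (N + 1) - φ N) * (M + 1), ?_, ?_⟩
  · nlinarith [Nat.sub_pos_of_lt hlt]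
  · rw [mul_nsmul', sub_nsmul _ hlt.le]
    simpa [dist_eq_norm, sub_eq_add_neg] using hN

theorem exists_nsmul_norm_sub_lt_of_mem_closure {b g : X}
    (hg : g ∈ closure (AddSubgroup.zmultiples b : Set X)) {δ : ℝ} (hδ : 0 < δ) (M : ℕ) :
    ∃ k, M ≤ k ∧ ‖g - k • b‖ < δ := by
  obtain ⟨-, ⟨j, rfl⟩, hj⟩ := Metric.mem_closure_iff.mp hg (δ / 2) (half_pos hδ)
  obtain ⟨k, hk, hkb⟩ := exists_nsmul_norm_lt b (half_pos hδ) (M + j.natAbs)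
  refine ⟨(j + k).toNat, by omega, ?_⟩
  have hjk : (((j + k).toNat : ℕ) : ℤ) = j + k := by omega
  calc ‖g - (j + k).toNat • b‖ = ‖(g - j • b) - k • b‖ := by
        rw [← natCast_zsmul, hjk, add_zsmul, natCast_zsmul, sub_add_eq_sub_sub]
    _ ≤ ‖g - j • b‖ + ‖k • b‖ := norm_sub_le _ _
    _ < δ := by rw [← dist_eq_norm]; linarith

end CompactRecurrence

section OrbitClosure

variable {X : Type*}

def orbitClosure [TopologicalSpace X] (T : X → X) (x : X) : Set X :=
  closure (range fun n : ℕ => T^[n] x)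

theorem self_mem_orbitClosure [TopologicalSpace X] (T : X → X) (x : X) : x ∈ orbitClosure T x :=
  subset_closure ⟨0, rfl⟩

theorem mapsTo_orbitClosure [TopologicalSpace X] {T : X → X} (hT : Continuous T) (x : X) :
    MapsTo T (orbitClosure T x) (orbitClosure T x) :=
  fun _ hy => map_mem_closure hT hy <| by
    rintro - ⟨n, rfl⟩
    exact ⟨n + 1, iterate_succ_apply' T n x⟩

theorem MinimalSubset.eq_orbitClosure [TopologicalSpace X] {T : X → X} {K : Set X}
    (hK : MinimalSubset T K) {x : X} (hx : x ∈ K) : K = orbitClosure T x := by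
  obtain ⟨-, hKc, hKT, hKd⟩ := hK
  refine (hKd x hx).antisymm (closure_minimal ?_ hKc)
  rintro - ⟨n, rfl⟩
  exact hKT.iterate n hx

variable [PseudoMetricSpace X] {T : X → X}

theorem meanAttracted_of_mem {x : X} {K : Set X} (hx : x ∈ K) : MeanAttracted T x K :=
  fun _ hε => ⟨x, hx, by simpa using hε⟩

theorem isMMA_of_forall_minimalSubset_orbitClosure
    (h : ∀ x, MinimalSubset T (orbitClosure T x)) : IsMMA T :=
  fun x => ⟨_, h x, meanAttracted_of_mem (self_mem_orbitClosure T x)⟩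

theorem isMMLS_of_forall_isMLSOn_orbitClosure (h : ∀ x, IsMLSOn T (orbitClosure T x)) :
    IsMMLS T := by
  intro K hK
  obtain ⟨x, hx⟩ := hK.1
  rw [hK.eq_orbitClosure hx]
  exact h x

theorem upperDensity_empty : upperDensity ∅ = 0 := by
  simp [upperDensity]

theorem isMLSOn_of_dist_iterate_le {K : Set X} {δ : ℝ} (hδ : 0 < δ)
    (h : ∀ y ∈ K, ∀ z ∈ K, dist y z < δ → ∀ n, dist (T^[n] y) (T^[n] z) ≤ dist y z) :
    IsMLSOn T K := by
  refine fun ε hε => ⟨min δ ε, lt_min hδ hε, fun y hy z hz hyz => ?_⟩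
  have hempty : {n : ℕ | ε ≤ dist (T^[n] y) (T^[n] z)} = ∅ :=
    eq_empty_of_forall_notMem fun n hn =>
      (h y hy z hz (hyz.trans_le (min_le_left _ _)) n).not_gt
        (hyz.trans_le (min_le_right _ _) |>.trans_le hn)
  rwa [hempty, upperDensity_empty]

end OrbitClosure

theorem AddSubgroup.exists_pos_mem_of_norm_lt_of_sub_mem {X : Type*} [SeminormedAddCommGroup X]
    {G : AddSubgroup X} (hG : IsClosed (G : Set X)) {D : Set X} (hD : D.Finite) :
    ∃ δ > 0, ∀ v : X, ‖v‖ < δ → ∀ d ∈ D, v - d ∈ G → v ∈ G := by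
  set F := ⋃ d ∈ D \ G, {v : X | v - d ∈ G}
  have hF : IsClosed F :=
    hD.sdiff.isClosed_biUnion fun d _ => hG.preimage (continuous_sub_right d)
  have h0 : (0 : X) ∉ F := by
    simp only [F, mem_iUnion, Set.mem_sdiff, SetLike.mem_coe, mem_ofPred_eq, zero_sub,
      neg_mem_iff]
    tauto
  obtain ⟨δ, hδ, hball⟩ := Metric.isOpen_iff.mp hF.isOpen_compl 0 h0
  refine ⟨δ, hδ, fun v hv d hd hvd => ?_⟩
  have hdG : d ∈ G := by
    by_contra hdG
    exact hball (mem_ball_zero_iff.mpr hv) (mem_biUnion ⟨hd, hdG⟩ hvd)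
  simpa using G.add_mem hvd hdG

section SignedOrbit

variable {X : Type*} [NormedAddCommGroup X]

def orbitCosets (T : X → X) (x b : X) (m : ℕ) : Set X :=
  {y | ∃ r < m, y - T^[r] x ∈ (AddSubgroup.zmultiples b).topologicalClosure}

theorem isClosed_orbitCosets (T : X → X) (x b : X) (m : ℕ) : IsClosed (orbitCosets T x b m) := by
  have : orbitCosets T x b m =
      ⋃ r ∈ Set.Iio m, {y | y - T^[r] x ∈ (AddSubgroup.zmultiples b).topologicalClosure} := by
    ext; simp [orbitCosets]
  rw [this]
  exact (finite_Iio m).isClosed_biUnion fun r _ =>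
    (AddSubgroup.isClosed_topologicalClosure _).preimage (continuous_sub_right _)

variable {T : X →+ X} {b : X} {σ : ℤˣ}

theorem map_eq_units_smul_of_mem_closure (hT : Continuous T) (hb : T b = σ • b) {g : X}
    (hg : g ∈ (AddSubgroup.zmultiples b).topologicalClosure) : T g = σ • g := by
  let H := T.eqLocus (DistribSMul.toAddMonoidHom X σ)
  have hH : IsClosed (H : Set X) := isClosed_eq hT (continuous_const_smul σ)
  exact AddSubgroup.topologicalClosure_minimal _ (AddSubgroup.zmultiples_le.mpr hb) hH hg

theorem iterate_eq_units_pow_smul_of_mem_closure (hT : Continuous T) (hb : T b = σ • b) {g : X}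
    (hg : g ∈ (AddSubgroup.zmultiples b).topologicalClosure) (n : ℕ) : T^[n] g = σ ^ n • g := by
  induction n with
  | zero => simp
  | succ n ih =>
    rw [iterate_succ_apply', ih, Units.smul_def, map_zsmul, ← Units.smul_def,
      map_eq_units_smul_of_mem_closure hT hb hg, pow_succ, mul_smul]

theorem iterate_mul_add_eq_add_nsmul (hT : Continuous T) (hb : T b = σ • b) {x : X} {m : ℕ}
    (hσm : σ ^ m = 1) (hx : T^[m] x = x + b) (k r : ℕ) :
    T^[m * k + r] x = T^[r] x + k • σ ^ r • b := by
  have hbG := AddSubgroup.le_topologicalClosure _ (AddSubgroup.mem_zmultiples b)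
  have hmk : T^[m * k] x = x + k • b := by
    induction k with
    | zero => simp
    | succ k ih =>
      rw [mul_add_one, iterate_add_apply, hx, iterate_map_add, ih,
        iterate_eq_units_pow_smul_of_mem_closure hT hb hbG, pow_mul, hσm, one_pow, one_smul,
        add_assoc, succ_nsmul]
  rw [add_comm, iterate_add_apply, hmk, iterate_map_add, iterate_map_nsmul,
    iterate_eq_units_pow_smul_of_mem_closure hT hb hbG]

theorem units_smul_mem_closure_zmultiples (u : ℤˣ) (b : X) :
    u • b ∈ (AddSubgroup.zmultiples b).topologicalClosure :=
  AddSubgroup.le_topologicalClosure _ (Units.smul_def u b ▸ AddSubgroup.zsmul_mem_zmultiples b u)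

theorem iterate_mem_orbitCosets (hT : Continuous T) (hb : T b = σ • b) {x : X} {m : ℕ}
    (hm : 0 < m) (hσm : σ ^ m = 1) (hx : T^[m] x = x + b) (n : ℕ) :
    T^[n] x ∈ orbitCosets T x b m := by
  refine ⟨n % m, Nat.mod_lt n hm, ?_⟩
  have h := iterate_mul_add_eq_add_nsmul hT hb hσm hx (n / m) (n % m)
  rw [Nat.div_add_mod] at h
  rw [h, add_sub_cancel_left]
  exact AddSubgroup.nsmul_mem _ (units_smul_mem_closure_zmultiples _ b) _

theorem exists_eq_add_of_mem_orbitCosets {T : X → X} {x b y : X} {m : ℕ}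
    (hy : y ∈ orbitCosets T x b m) :
    ∃ r < m, ∃ h ∈ (AddSubgroup.zmultiples b).topologicalClosure, y = T^[r] x + h := by
  obtain ⟨r, hr, hh⟩ := hy
  exact ⟨r, hr, _, hh, (add_sub_cancel _ _).symm⟩

theorem orbitCosets_subset_orbitClosure [CompactSpace X] (hT : Continuous T) (hb : T b = σ • b)
    {x : X} {m : ℕ} (hσm : σ ^ m = 1) (hx : T^[m] x = x + b) {y : X}
    (hy : y ∈ orbitCosets T x b m) : orbitCosets T x b m ⊆ orbitClosure T y := by
  obtain ⟨r, hr, h, hh, rfl⟩ := exists_eq_add_of_mem_orbitCosets hy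
  intro z hz
  obtain ⟨t, -, g, hg, rfl⟩ := exists_eq_add_of_mem_orbitCosets hz
  refine Metric.mem_closure_iff.mpr fun δ hδ => ?_
  have hc : σ ^ t • g - σ ^ r • h ∈ (AddSubgroup.zmultiples b).topologicalClosure := by
    rw [Units.smul_def, Units.smul_def]
    exact sub_mem (AddSubgroup.zsmul_mem _ hg _) (AddSubgroup.zsmul_mem _ hh _)
  obtain ⟨k, hk, hkb⟩ := exists_nsmul_norm_sub_lt_of_mem_closure hc hδ 1
  have hrk : r ≤ m * k := hr.le.trans (Nat.le_mul_of_pos_right m hk)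
  obtain ⟨n, hn⟩ : ∃ n, n + r = m * k + t := ⟨m * k + t - r, by omega⟩
  have hσn : σ ^ n = σ ^ t * σ ^ r := by
    rw [← mul_inv_eq_iff_eq_mul, Int.units_inv_eq_self, ← pow_add, hn, pow_add, pow_mul, hσm,
      one_pow, one_mul]
  have hTn : T^[n] (T^[r] x + h) = T^[t] x + k • σ ^ t • b + σ ^ n • h := by
    rw [iterate_map_add, ← iterate_add_apply, hn, iterate_mul_add_eq_add_nsmul hT hb hσm hx,
      iterate_eq_units_pow_smul_of_mem_closure hT hb hh]
  have hsub : T^[t] x + g - T^[n] (T^[r] x + h) = σ ^ t • (σ ^ t • g - σ ^ r • h - k • b) := by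
    rw [hTn, hσn, smul_sub, smul_sub, smul_smul, smul_smul, smul_comm (σ ^ t) k,
      Int.units_mul_self, one_smul]
    abel
  refine ⟨_, ⟨n, rfl⟩, ?_⟩
  rwa [dist_eq_norm, hsub, norm_units_zsmul]

theorem orbitClosure_eq_orbitCosets [CompactSpace X] (hT : Continuous T) (hb : T b = σ • b)
    {x : X} {m : ℕ} (hm : 0 < m) (hσm : σ ^ m = 1) (hx : T^[m] x = x + b) :
    orbitClosure T x = orbitCosets T x b m := by
  have hmem := iterate_mem_orbitCosets hT hb hm hσm hx
  exact (closure_minimal (range_subset_iff.mpr hmem) (isClosed_orbitCosets _ _ _ _)).antisymm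
    (orbitCosets_subset_orbitClosure hT hb hσm hx (hmem 0))

theorem dist_iterate_eq_of_sub_mem (hT : Continuous T) (hb : T b = σ • b) {y z : X}
    (h : y - z ∈ (AddSubgroup.zmultiples b).topologicalClosure) (n : ℕ) :
    dist (T^[n] y) (T^[n] z) = dist y z := by
  rw [dist_eq_norm, dist_eq_norm, ← iterate_map_sub,
    iterate_eq_units_pow_smul_of_mem_closure hT hb h, norm_units_zsmul]

theorem exists_pos_sub_mem_of_dist_lt (T : X → X) (x b : X) (m : ℕ) :
    ∃ δ > 0, ∀ y ∈ orbitCosets T x b m, ∀ z ∈ orbitCosets T x b m, dist y z < δ →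
      y - z ∈ (AddSubgroup.zmultiples b).topologicalClosure := by
  obtain ⟨δ, hδ, hG⟩ := AddSubgroup.exists_pos_mem_of_norm_lt_of_sub_mem
    (AddSubgroup.isClosed_topologicalClosure _)
    ((finite_Iio m).image2 (fun r t => T^[r] x - T^[t] x) (finite_Iio m))
  refine ⟨δ, hδ, fun y hy z hz hyz => ?_⟩
  obtain ⟨r, hr, h, hh, rfl⟩ := exists_eq_add_of_mem_orbitCosets hy
  obtain ⟨t, ht, g, hg, rfl⟩ := exists_eq_add_of_mem_orbitCosets hz
  refine hG _ (by rwa [← dist_eq_norm]) _ (mem_image2_of_mem hr ht) ?_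
  convert sub_mem hh hg using 1
  abel

theorem minimalSubset_orbitClosure [CompactSpace X] (hT : Continuous T) (hb : T b = σ • b)
    {x : X} {m : ℕ} (hm : 0 < m) (hσm : σ ^ m = 1) (hx : T^[m] x = x + b) :
    MinimalSubset T (orbitClosure T x) := by
  refine ⟨⟨x, self_mem_orbitClosure T x⟩, isClosed_closure, mapsTo_orbitClosure hT x,
    fun y hy => ?_⟩
  rw [orbitClosure_eq_orbitCosets hT hb hm hσm hx] at hy ⊢
  exact orbitCosets_subset_orbitClosure hT hb hσm hx hy

theorem isMLSOn_orbitClosure [CompactSpace X] (hT : Continuous T) (hb : T b = σ • b)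
    {x : X} {m : ℕ} (hm : 0 < m) (hσm : σ ^ m = 1) (hx : T^[m] x = x + b) :
    IsMLSOn T (orbitClosure T x) := by
  obtain ⟨δ, hδ, hsub⟩ := exists_pos_sub_mem_of_dist_lt T x b m
  rw [orbitClosure_eq_orbitCosets hT hb hm hσm hx]
  exact isMLSOn_of_dist_iterate_le hδ fun y hy z hz hyz n =>
    (dist_iterate_eq_of_sub_mem hT hb (hsub y hy z hz hyz) n).le

end SignedOrbit

theorem Complex.add_eq_zero_of_norm_eq_one_of_mul_eq_neg_one {μ₁ μ₂ : ℂ} (h₁ : ‖μ₁‖ = 1)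
    (h₂ : ‖μ₂‖ = 1) (hmul : μ₁ * μ₂ = -1) (hreal : (starRingEnd ℂ) (μ₁ + μ₂) = μ₁ + μ₂) :
    μ₁ + μ₂ = 0 := by
  -- `conj μ = μ⁻¹`, so `μ₁ + μ₂ = conj (μ₁ + μ₂) = (μ₁ + μ₂) / (μ₁ * μ₂) = -(μ₁ + μ₂)`
  have hμ₁ : μ₁ ≠ 0 := by rintro rfl; simp at h₁
  have hμ₂ : μ₂ ≠ 0 := by rintro rfl; simp at h₂
  rw [map_add, ← Complex.inv_eq_conj h₁, ← Complex.inv_eq_conj h₂] at hreal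
  field_simp at hreal
  linear_combination hreal / 2 + (μ₁ + μ₂) * hmul / 2

open Polynomial Matrix

theorem Matrix.mul_pow_sub_one_eq_smul_of_charpoly_dvd {n R : Type*} [Fintype n] [DecidableEq n]
    [CommRing R] (A : Matrix n n R) {s : R} {m : ℕ} (h : A.charpoly ∣ (X - C s) * (X ^ m - 1)) :
    A * (A ^ m - 1) = s • (A ^ m - 1) := by
  obtain ⟨q, hq⟩ := h
  have := congrArg (aeval A) hq
  simp only [map_mul, map_sub, aeval_X, aeval_C, map_pow, map_one, aeval_self_charpoly,
    zero_mul] at this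
  rw [Algebra.smul_def, ← sub_eq_zero, ← sub_mul, this]

theorem EigenvaluesModulusOne.exists_trace_det_eq {A : Matrix (Fin 2) (Fin 2) ℤ}
    (heig : EigenvaluesModulusOne A) :
    ∃ μ₁ μ₂ : ℂ, ‖μ₁‖ = 1 ∧ ‖μ₂‖ = 1 ∧ (A.trace : ℂ) = μ₁ + μ₂ ∧ (A.det : ℂ) = μ₁ * μ₂ := by
  set B := A.map (Int.cast : ℤ → ℂ)
  obtain ⟨μ₁, μ₂, hroots⟩ : ∃ μ₁ μ₂, B.charpoly.roots = {μ₁, μ₂} := by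
    refine Multiset.card_eq_two.mp ?_
    rw [splits_iff_card_roots.mp (IsAlgClosed.splits _), charpoly_natDegree_eq_dim,
      Fintype.card_fin]
  have hnorm : ∀ μ ∈ B.charpoly.roots, ‖μ‖ = 1 := heig
  refine ⟨μ₁, μ₂, hnorm μ₁ (by simp [hroots]), hnorm μ₂ (by simp [hroots]), ?_, ?_⟩
  · rw [show (A.trace : ℂ) = B.trace by simp [B, trace_fin_two], trace_eq_sum_roots_charpoly,
      hroots]
    simp
  · rw [show (A.det : ℂ) = B.det by simp [B, det_fin_two], det_eq_prod_roots_charpoly, hroots]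
    simp

theorem EigenvaluesModulusOne.abs_trace_le_two {A : Matrix (Fin 2) (Fin 2) ℤ}
    (heig : EigenvaluesModulusOne A) : |A.trace| ≤ 2 := by
  obtain ⟨μ₁, μ₂, h₁, h₂, htr, -⟩ := heig.exists_trace_det_eq
  have : ‖(A.trace : ℂ)‖ ≤ 2 := by
    rw [htr]
    exact (norm_add_le _ _).trans (by rw [h₁, h₂]; norm_num)
  rwa [Complex.norm_intCast, ← Int.cast_abs, show (2 : ℝ) = ((2 : ℤ) : ℝ) by norm_num,
    Int.cast_le] at this

theorem EigenvaluesModulusOne.trace_eq_zero_of_det_eq_neg_one {A : Matrix (Fin 2) (Fin 2) ℤ}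
    (heig : EigenvaluesModulusOne A) (hd : A.det = -1) : A.trace = 0 := by
  obtain ⟨μ₁, μ₂, h₁, h₂, htr, hdet⟩ := heig.exists_trace_det_eq
  have := Complex.add_eq_zero_of_norm_eq_one_of_mul_eq_neg_one h₁ h₂
    (by rw [← hdet, hd]; simp) (by rw [← htr, map_intCast])
  exact_mod_cast htr.trans this

theorem EigenvaluesModulusOne.exists_charpoly_dvd {A : Matrix (Fin 2) (Fin 2) ℤ}
    (hdet : A.det = 1 ∨ A.det = -1) (heig : EigenvaluesModulusOne A) :
    ∃ m > 0, ∃ σ : ℤˣ, σ ^ m = 1 ∧ A.charpoly ∣ (X - C (σ : ℤ)) * (X ^ m - 1) := by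
  -- `A` has finite order, except for trace `± 2` where `A ∓ 1` is nilpotent
  rw [charpoly_fin_two]
  rcases hdet with hd | hd
  · obtain ⟨hlo, hhi⟩ := abs_le.mp heig.abs_trace_le_two
    rw [hd]
    interval_cases A.trace
    · exact ⟨2, two_pos, -1, by norm_num, X - 1, by simp; ring⟩
    · exact ⟨3, three_pos, 1, one_pow 3, (X - 1) ^ 2, by simp; ring⟩
    · exact ⟨4, four_pos, 1, one_pow 4, (X - 1) ^ 2 * (X + 1), by simp; ring⟩
    · exact ⟨6, by norm_num, 1, one_pow 6, (X - 1) ^ 2 * (X + 1) * (X ^ 2 + X + 1),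
        by simp; ring⟩
    · exact ⟨1, one_pos, 1, one_pow 1, 1, by simp; ring⟩
  · rw [hd, heig.trace_eq_zero_of_det_eq_neg_one hd]
    exact ⟨2, two_pos, 1, one_pow 2, X - 1, by simp; ring⟩

theorem torusLattice_eq_span :
    torusLattice = (Submodule.span ℤ
      (range (EuclideanSpace.basisFun (Fin 2) ℝ).toBasis)).toAddSubgroup := by
  rw [Submodule.span_int_eq_addSubgroupClosure, torusLattice]
  congr
  ext
  simp [EuclideanSpace.basisFun_apply]

-- Through `QuotientAddGroup.instNormedAddCommGroup`, this makes `Torus2` a normed group.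
instance isClosed_torusLattice : IsClosed (torusLattice : Set (EuclideanSpace ℝ (Fin 2))) := by
  rw [torusLattice_eq_span]
  exact AddSubgroup.isClosed_of_discrete

instance : CompactSpace Torus2 := by
  refine ⟨?_⟩
  rw [← range_eq_univ.mpr (QuotientAddGroup.mk_surjective (s := torusLattice))]
  refine IsZLattice.isCompact_range_of_periodic
    (Submodule.span ℤ (range (EuclideanSpace.basisFun (Fin 2) ℝ).toBasis)) _ continuous_quot_mk
    fun z w hw => ?_
  rw [QuotientAddGroup.mk_add, (QuotientAddGroup.eq_zero_iff w).mpr (torusLattice_eq_span ▸ hw),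
    add_zero]

section MatAction

variable (A B : Matrix (Fin 2) (Fin 2) ℤ) (v w : EuclideanSpace ℝ (Fin 2))

theorem matAction_eq_toEuclideanCLM :
    matAction A v =
      Matrix.toEuclideanCLM (n := Fin 2) (𝕜 := ℝ) ((Int.castRingHom ℝ).mapMatrix A) v :=
  rfl

theorem matAction_add : matAction A (v + w) = matAction A v + matAction A w := by
  simp only [matAction_eq_toEuclideanCLM, map_add]

theorem matAction_one : matAction 1 v = v := by
  simp only [matAction_eq_toEuclideanCLM, map_one]
  rfl

theorem matAction_mul : matAction (A * B) v = matAction A (matAction B v) := by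
  simp only [matAction_eq_toEuclideanCLM, map_mul]
  rfl

theorem matAction_sub_one : matAction (A - 1) v = matAction A v - v := by
  simp only [matAction_eq_toEuclideanCLM, map_sub, map_one]
  rfl

theorem matAction_zsmul (c : ℤ) : matAction (c • A) v = c • matAction A v := by
  simp only [matAction_eq_toEuclideanCLM, map_zsmul]
  rfl

end MatAction

section TorusMap

variable {A : Matrix (Fin 2) (Fin 2) ℤ} {TA : Torus2 → Torus2}

theorem torusMap_add
    (hTA : ∀ v, TA (QuotientAddGroup.mk v) = QuotientAddGroup.mk (matAction A v)) (p q : Torus2) :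
    TA (p + q) = TA p + TA q := by
  induction p using QuotientAddGroup.induction_on
  induction q using QuotientAddGroup.induction_on
  rw [← QuotientAddGroup.mk_add, hTA, hTA, hTA, matAction_add, QuotientAddGroup.mk_add]

theorem torusMap_iterate_mk
    (hTA : ∀ v, TA (QuotientAddGroup.mk v) = QuotientAddGroup.mk (matAction A v)) (n : ℕ) (v) :
    TA^[n] (QuotientAddGroup.mk v) = QuotientAddGroup.mk (matAction (A ^ n) v) := by
  induction n with
  | zero => rw [iterate_zero_apply, pow_zero, matAction_one]
  | succ n ih => rw [iterate_succ_apply', ih, hTA, ← matAction_mul, ← pow_succ']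

theorem torusMap_exists_iterate_eq_add
    (hTA : ∀ v, TA (QuotientAddGroup.mk v) = QuotientAddGroup.mk (matAction A v))
    {m : ℕ} {σ : ℤˣ} (hA : A * (A ^ m - 1) = (σ : ℤ) • (A ^ m - 1)) (x : Torus2) :
    ∃ b, TA^[m] x = x + b ∧ TA b = σ • b := by
  obtain ⟨v, rfl⟩ := QuotientAddGroup.mk_surjective x
  refine ⟨QuotientAddGroup.mk (matAction (A ^ m - 1) v), ?_, ?_⟩
  · rw [torusMap_iterate_mk hTA, matAction_sub_one, ← QuotientAddGroup.mk_add, add_sub_cancel]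
  · rw [hTA, ← matAction_mul, hA, matAction_zsmul, QuotientAddGroup.mk_zsmul, Units.smul_def]

end TorusMap

/-- If `A ∈ SL(2,ℤ)` (det `±1`) has all eigenvalues of modulus `1`,
then the automorphism flow `(𝕋², T_A)` is MMA and MMLS. -/
theorem torus_automorphism_MMA_MMLS
    (A : Matrix (Fin 2) (Fin 2) ℤ) (hdet : A.det = 1 ∨ A.det = -1)
    (heig : EigenvaluesModulusOne A)
    (TA : Torus2 → Torus2) (hTAcont : Continuous TA)
    (hTA : ∀ v : EuclideanSpace ℝ (Fin 2),
      TA (QuotientAddGroup.mk v) = QuotientAddGroup.mk (matAction A v)) :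
    IsMMA TA ∧ IsMMLS TA := by
  obtain ⟨m, hm, σ, hσm, hdvd⟩ := heig.exists_charpoly_dvd hdet
  have hA := A.mul_pow_sub_one_eq_smul_of_charpoly_dvd hdvd
  let T : Torus2 →+ Torus2 := AddMonoidHom.mk' TA (torusMap_add hTA)
  refine ⟨isMMA_of_forall_minimalSubset_orbitClosure fun x => ?_,
    isMMLS_of_forall_isMLSOn_orbitClosure fun x => ?_⟩ <;>
  obtain ⟨b, hx, hb⟩ := torusMap_exists_iterate_eq_add hTA hA x
  · exact minimalSubset_orbitClosure (T := T) hTAcont hb hm hσm hx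
  · exact isMLSOn_orbitClosure (T := T) hTAcont hb hm hσm hx
end
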